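/- arXiv:2302.00051 — 2 statements merged into one kernel-verified Lean document; each statement's English description precedes it below -/
import Mathlib

section
/- Let k ≥ 1 and consider the action of the circle group S¹ = {λ ∈ ℂ : |λ| = 1} on ℂP^{2k} = ℙ(ℂ^{2k+1}) induced by the linear action λ·(z₀,…,z_{2k-2},z_{2k-1},z_{2k}) = (z₀,…,z_{2k-2}, λ·z_{2k-1}, λ⁻¹·z_{2k}) on ℂ^{2k+1}. Then the stabilizer of a point [z₀:…:z_{2k}] ∈ ℂP^{2k} is classified as follows: (i) the stabilizer is all of S¹ if and only if the point is a fixed point, i.e. (z_{2k-1} = 0 and z_{2k} = 0) or (z_i = 0 for all 0 ≤ i ≤ 2k-2 and z_{2k} = 0) or (z_i = 0 for all 0 ≤ i ≤ 2k-2 and z_{2k-1} = 0); (ii) the stabilizer equals {1, −1} if and only if z_i = 0 for all 0 ≤ i ≤ 2k-2, z_{2k-1} ≠ 0 and z_{2k} ≠ 0; (iii) in all remaining cases the stabilizer is trivial. -/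
/-- The weight by which `l ∈ S¹` acts on the `i`-th coordinate of `ℂ^{2k+1}`:
multiplication by `l` on coordinate `2k-1`, by `l⁻¹` on coordinate `2k`,
and trivially on the remaining coordinates. -/
noncomputable def circleWeight (k : ℕ) (l : Circle) (i : Fin (2 * k + 1)) : ℂ :=
  if (i : ℕ) = 2 * k - 1 then (l : ℂ)
  else if (i : ℕ) = 2 * k then (l : ℂ)⁻¹
  else 1

lemma circleWeight_ne_zero (k : ℕ) (l : Circle) (i : Fin (2 * k + 1)) :
    circleWeight k l i ≠ 0 := by
  have h : (l : ℂ) ≠ 0 := Circle.coe_ne_zero l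
  unfold circleWeight
  split_ifs
  · exact h
  · exact inv_ne_zero h
  · exact one_ne_zero

/-- The linear action of `l ∈ S¹` on `ℂ^{2k+1}`:
`l • (z₀, …, z_{2k-2}, z_{2k-1}, z_{2k}) = (z₀, …, z_{2k-2}, l·z_{2k-1}, l⁻¹·z_{2k})`. -/
noncomputable def circleActLin (k : ℕ) (l : Circle) :
    (Fin (2 * k + 1) → ℂ) →ₗ[ℂ] (Fin (2 * k + 1) → ℂ) where
  toFun z := fun i => circleWeight k l i * z i
  map_add' x y := by funext i; simp [mul_add]
  map_smul' c x := by funext i; simp [smul_eq_mul]; ring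

lemma circleActLin_injective (k : ℕ) (l : Circle) :
    Function.Injective (circleActLin k l) := by
  intro x y hxy
  funext i
  have h : circleWeight k l i * x i = circleWeight k l i * y i := congrFun hxy i
  exact mul_left_cancel₀ (circleWeight_ne_zero k l i) h

/-- The induced action of `l ∈ S¹` on the complex projective space
`ℂP^{2k} = ℙ(ℂ^{2k+1})`. -/
noncomputable def circleAct (k : ℕ) (l : Circle) :
    Projectivization ℂ (Fin (2 * k + 1) → ℂ) → Projectivization ℂ (Fin (2 * k + 1) → ℂ) :=
  Projectivization.map (circleActLin k l) (circleActLin_injective k l)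

-- my aux lemmas

lemma mem_stab_iff (k : ℕ) (l : Circle) (z : Fin (2 * k + 1) → ℂ) (hz : z ≠ 0) :
    circleAct k l (Projectivization.mk ℂ z hz) = Projectivization.mk ℂ z hz ↔
      ∃ c : ℂ, c ≠ 0 ∧ ∀ i, circleWeight k l i * z i = c * z i := by
  unfold circleAct
  rw [Projectivization.map_mk, Projectivization.mk_eq_mk_iff']
  constructor
  · rintro ⟨c, hc⟩
    have hcne : c ≠ 0 := by
      rintro rfl
      apply hz
      apply circleActLin_injective k l
      rw [← hc]
      simp
    refine ⟨c, hcne, fun i => ?_⟩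
    have := congrFun hc i
    simpa [smul_eq_mul, circleActLin, eq_comm] using this
  · rintro ⟨c, hc, h⟩
    refine ⟨c, ?_⟩
    funext i
    have := h i
    simpa [smul_eq_mul, circleActLin, eq_comm] using this

lemma weight_last (k : ℕ) (hk : 1 ≤ k) (l : Circle) :
    circleWeight k l ⟨2 * k, Nat.lt_succ_of_le (Nat.le_refl _)⟩ = (l : ℂ)⁻¹ := by
  simp only [circleWeight]
  rw [if_neg (by omega)]
  simp

lemma weight_pre (k : ℕ) (l : Circle) :
    circleWeight k l ⟨2 * k - 1, Nat.lt_succ_of_le (Nat.sub_le _ _)⟩ = (l : ℂ) := by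
  simp [circleWeight]

lemma weight_small (k : ℕ) (hk : 1 ≤ k) (l : Circle) (i : Fin (2 * k + 1))
    (hi : (i : ℕ) ≤ 2 * k - 2) : circleWeight k l i = 1 := by
  simp only [circleWeight]
  rw [if_neg (by omega), if_neg (by omega)]

section main
variable (k : ℕ) (hk : 1 ≤ k) (z : Fin (2 * k + 1) → ℂ) (hz : z ≠ 0)

lemma stab_univ
    (hA : (z ⟨2 * k - 1, by have _h := hk; omega⟩ = 0 ∧ z ⟨2 * k, by have _h := hk; omega⟩ = 0) ∨
       ((∀ i : Fin (2 * k + 1), (i : ℕ) ≤ 2 * k - 2 → z i = 0) ∧ z ⟨2 * k, by have _h := hk; omega⟩ = 0) ∨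
       ((∀ i : Fin (2 * k + 1), (i : ℕ) ≤ 2 * k - 2 → z i = 0) ∧
          z ⟨2 * k - 1, by have _h := hk; omega⟩ = 0)) :
    {l : Circle |
        circleAct k l (Projectivization.mk ℂ z hz) = Projectivization.mk ℂ z hz} = Set.univ := by
  ext l
  simp only [Set.mem_setOf_eq, Set.mem_univ, iff_true]
  rw [mem_stab_iff]
  rcases hA with ⟨ha, hb⟩ | ⟨hR, hb⟩ | ⟨hR, ha⟩
  · refine ⟨1, one_ne_zero, fun i => ?_⟩
    simp only [circleWeight]
    split_ifs with h1 h2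
    · rw [show i = ⟨2 * k - 1, Nat.lt_succ_of_le (Nat.sub_le _ _)⟩ from Fin.ext h1, ha]; ring
    · rw [show i = ⟨2 * k, Nat.lt_succ_of_le (Nat.le_refl _)⟩ from Fin.ext h2, hb]; ring
    · ring
  · refine ⟨(l : ℂ), Circle.coe_ne_zero l, fun i => ?_⟩
    simp only [circleWeight]
    split_ifs with h1 h2
    · rfl
    · rw [show i = ⟨2 * k, Nat.lt_succ_of_le (Nat.le_refl _)⟩ from Fin.ext h2, hb]; ring
    · rw [hR i (by omega)]; ring
  · refine ⟨(l : ℂ)⁻¹, inv_ne_zero (Circle.coe_ne_zero l), fun i => ?_⟩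
    simp only [circleWeight]
    split_ifs with h1 h2
    · rw [show i = ⟨2 * k - 1, Nat.lt_succ_of_le (Nat.sub_le _ _)⟩ from Fin.ext h1, ha]; ring
    · rfl
    · rw [hR i (by omega)]; ring

lemma stab_pm
    (hR : ∀ i : Fin (2 * k + 1), (i : ℕ) ≤ 2 * k - 2 → z i = 0)
    (ha : z ⟨2 * k - 1, by have _h := hk; omega⟩ ≠ 0) (hb : z ⟨2 * k, by have _h := hk; omega⟩ ≠ 0) :
    {l : Circle |
        circleAct k l (Projectivization.mk ℂ z hz) = Projectivization.mk ℂ z hz} =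
      {l : Circle | (l : ℂ) = 1 ∨ (l : ℂ) = -1} := by
  ext l
  simp only [Set.mem_setOf_eq]
  rw [mem_stab_iff]
  constructor
  · rintro ⟨c, hc, h⟩
    have h1 := h ⟨2 * k - 1, Nat.lt_succ_of_le (Nat.sub_le _ _)⟩
    rw [weight_pre] at h1
    have hl : (l : ℂ) = c := mul_right_cancel₀ ha h1
    have h2 := h ⟨2 * k, Nat.lt_succ_of_le (Nat.le_refl _)⟩
    rw [weight_last k hk] at h2
    have hl2 : ((l : ℂ))⁻¹ = c := mul_right_cancel₀ hb h2
    have he : (l : ℂ) = ((l : ℂ))⁻¹ := hl.trans hl2.symm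
    have hll : (l : ℂ) * (l : ℂ) = 1 := by
      nth_rewrite 2 [he]
      exact mul_inv_cancel₀ (Circle.coe_ne_zero l)
    exact mul_self_eq_one_iff.1 hll
  · intro hl
    have hinv : ((l : ℂ))⁻¹ = (l : ℂ) := by
      rcases hl with h | h <;> rw [h] <;> norm_num
    refine ⟨(l : ℂ), Circle.coe_ne_zero l, fun i => ?_⟩
    simp only [circleWeight]
    split_ifs with h1 h2
    · rfl
    · rw [hinv]
    · rw [hR i (by omega)]; ring

lemma stab_one
    (hnA : ¬ ((z ⟨2 * k - 1, by have _h := hk; omega⟩ = 0 ∧ z ⟨2 * k, by have _h := hk; omega⟩ = 0) ∨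
       ((∀ i : Fin (2 * k + 1), (i : ℕ) ≤ 2 * k - 2 → z i = 0) ∧ z ⟨2 * k, by have _h := hk; omega⟩ = 0) ∨
       ((∀ i : Fin (2 * k + 1), (i : ℕ) ≤ 2 * k - 2 → z i = 0) ∧
          z ⟨2 * k - 1, by have _h := hk; omega⟩ = 0)))
    (hnB : ¬ ((∀ i : Fin (2 * k + 1), (i : ℕ) ≤ 2 * k - 2 → z i = 0) ∧
        z ⟨2 * k - 1, by have _h := hk; omega⟩ ≠ 0 ∧ z ⟨2 * k, by have _h := hk; omega⟩ ≠ 0)) :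
    {l : Circle |
        circleAct k l (Projectivization.mk ℂ z hz) = Projectivization.mk ℂ z hz} = {1} := by
  push_neg at hnA
  obtain ⟨hn1, hn2, hn3⟩ := hnA
  have hnR : ¬ (∀ i : Fin (2 * k + 1), (i : ℕ) ≤ 2 * k - 2 → z i = 0) := by
    intro hR
    by_cases ha : z ⟨2 * k - 1, Nat.lt_succ_of_le (Nat.sub_le _ _)⟩ = 0
    · exact hn3 hR ha
    · by_cases hb : z ⟨2 * k, Nat.lt_succ_of_le (Nat.le_refl _)⟩ = 0
      · exact hn2 hR hb
      · exact hnB ⟨hR, ha, hb⟩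
  push_neg at hnR
  obtain ⟨i₀, hi₀, hzi₀⟩ := hnR
  ext l
  simp only [Set.mem_setOf_eq, Set.mem_singleton_iff]
  rw [mem_stab_iff]
  constructor
  · rintro ⟨c, hc, h⟩
    have hc1 : c = 1 := by
      have := h i₀
      rw [weight_small k hk l i₀ hi₀] at this
      exact (mul_right_cancel₀ hzi₀ this.symm)
    subst hc1
    by_cases ha : z ⟨2 * k - 1, Nat.lt_succ_of_le (Nat.sub_le _ _)⟩ = 0
    · have hb : z ⟨2 * k, Nat.lt_succ_of_le (Nat.le_refl _)⟩ ≠ 0 := hn1 ha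
      have h2 := h ⟨2 * k, Nat.lt_succ_of_le (Nat.le_refl _)⟩
      rw [weight_last k hk] at h2
      have : ((l : ℂ))⁻¹ = 1 := by
        have := mul_right_cancel₀ hb h2
        simpa using this
      exact Circle.coe_eq_one.1 (inv_eq_one.1 this)
    · have h1 := h ⟨2 * k - 1, Nat.lt_succ_of_le (Nat.sub_le _ _)⟩
      rw [weight_pre] at h1
      have : (l : ℂ) = 1 := by
        have := mul_right_cancel₀ ha h1
        simpa using this
      exact Circle.coe_eq_one.1 this
  · rintro rfl
    refine ⟨1, one_ne_zero, fun i => ?_⟩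
    simp only [circleWeight, Circle.coe_one, inv_one]
    split_ifs <;> ring

end main

noncomputable def jI : Circle := ⟨Complex.I, by simp [Submonoid.unitSphere, Metric.mem_sphere]⟩

lemma jI_coe : (jI : ℂ) = Complex.I := rfl

lemma I_ne_one : Complex.I ≠ 1 := by
  intro h
  have := congrArg Complex.im h
  simp at this

lemma I_ne_neg_one : Complex.I ≠ -1 := by
  intro h
  have := congrArg Complex.im h
  simp at this

noncomputable def mNeg : Circle := ⟨-1, by simp [Submonoid.unitSphere, Metric.mem_sphere]⟩

lemma mNeg_coe : (mNeg : ℂ) = -1 := rfl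

lemma jI_not_pm : ¬ ((jI : ℂ) = 1 ∨ (jI : ℂ) = -1) := by
  rw [jI_coe]
  rintro (h | h)
  · exact I_ne_one h
  · exact I_ne_neg_one h


/-- Classification of the stabilizers of the circle action on `ℂP^{2k}`:
(i) the stabilizer of `[z₀ : … : z_{2k}]` is all of `S¹` iff the point is a fixed point;
(ii) it equals `{1, -1}` iff `z_i = 0` for all `0 ≤ i ≤ 2k-2` while `z_{2k-1} ≠ 0` and
`z_{2k} ≠ 0`; (iii) in all remaining cases the stabilizer is trivial. -/
theorem circleAct_stabilizer_classification (k : ℕ) (hk : 1 ≤ k)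
    (z : Fin (2 * k + 1) → ℂ) (hz : z ≠ 0) :
    ({l : Circle |
        circleAct k l (Projectivization.mk ℂ z hz) = Projectivization.mk ℂ z hz} = Set.univ ↔
      ((z ⟨2 * k - 1, by omega⟩ = 0 ∧ z ⟨2 * k, by omega⟩ = 0) ∨
       ((∀ i : Fin (2 * k + 1), (i : ℕ) ≤ 2 * k - 2 → z i = 0) ∧ z ⟨2 * k, by omega⟩ = 0) ∨
       ((∀ i : Fin (2 * k + 1), (i : ℕ) ≤ 2 * k - 2 → z i = 0) ∧
          z ⟨2 * k - 1, by omega⟩ = 0))) ∧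
    ({l : Circle |
        circleAct k l (Projectivization.mk ℂ z hz) = Projectivization.mk ℂ z hz} =
          {l : Circle | (l : ℂ) = 1 ∨ (l : ℂ) = -1} ↔
      ((∀ i : Fin (2 * k + 1), (i : ℕ) ≤ 2 * k - 2 → z i = 0) ∧
        z ⟨2 * k - 1, by omega⟩ ≠ 0 ∧ z ⟨2 * k, by omega⟩ ≠ 0)) ∧
    (¬ ((z ⟨2 * k - 1, by omega⟩ = 0 ∧ z ⟨2 * k, by omega⟩ = 0) ∨
        ((∀ i : Fin (2 * k + 1), (i : ℕ) ≤ 2 * k - 2 → z i = 0) ∧ z ⟨2 * k, by omega⟩ = 0) ∨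
        ((∀ i : Fin (2 * k + 1), (i : ℕ) ≤ 2 * k - 2 → z i = 0) ∧
           z ⟨2 * k - 1, by omega⟩ = 0)) →
     ¬ ((∀ i : Fin (2 * k + 1), (i : ℕ) ≤ 2 * k - 2 → z i = 0) ∧
          z ⟨2 * k - 1, by omega⟩ ≠ 0 ∧ z ⟨2 * k, by omega⟩ ≠ 0) →
     {l : Circle |
        circleAct k l (Projectivization.mk ℂ z hz) = Projectivization.mk ℂ z hz} = {1}) := by
  refine ⟨⟨?_, stab_univ k hk z hz⟩, ⟨?_, fun hB => stab_pm k hk z hz hB.1 hB.2.1 hB.2.2⟩,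
    stab_one k hk z hz⟩
  · intro hS
    by_contra hA
    by_cases hB : (∀ i : Fin (2 * k + 1), (i : ℕ) ≤ 2 * k - 2 → z i = 0) ∧
        z ⟨2 * k - 1, by omega⟩ ≠ 0 ∧ z ⟨2 * k, by omega⟩ ≠ 0
    · have h2 := stab_pm k hk z hz hB.1 hB.2.1 hB.2.2
      rw [hS] at h2
      exact jI_not_pm ((Set.ext_iff.1 h2 jI).1 trivial)
    · have h2 := stab_one k hk z hz hA hB
      rw [hS] at h2
      have hj : jI = 1 := by rw [← Set.mem_singleton_iff, ← h2]; trivial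
      exact I_ne_one (by rw [← jI_coe, Circle.coe_eq_one.2 hj])
  · intro hS
    by_contra hB
    by_cases hA : (z ⟨2 * k - 1, by omega⟩ = 0 ∧ z ⟨2 * k, by omega⟩ = 0) ∨
       ((∀ i : Fin (2 * k + 1), (i : ℕ) ≤ 2 * k - 2 → z i = 0) ∧ z ⟨2 * k, by omega⟩ = 0) ∨
       ((∀ i : Fin (2 * k + 1), (i : ℕ) ≤ 2 * k - 2 → z i = 0) ∧
          z ⟨2 * k - 1, by omega⟩ = 0)
    · have h2 := stab_univ k hk z hz hA
      rw [hS] at h2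
      exact jI_not_pm ((Set.ext_iff.1 h2.symm jI).1 trivial)
    · have h2 := stab_one k hk z hz hA hB
      rw [hS] at h2
      have hm : mNeg ∈ ({1} : Set Circle) := by
        rw [← h2]
        show (mNeg : ℂ) = 1 ∨ (mNeg : ℂ) = -1
        right; exact mNeg_coe
      have h3 : (mNeg : ℂ) = 1 := Circle.coe_eq_one.2 (Set.mem_singleton_iff.1 hm)
      rw [mNeg_coe] at h3
      norm_num at h3
end

section
/- Let k ≥ 1. Let S ∈ ℚ[[X]] be the formal power series S = ∑_{n≥0} X^{2n} / (4ⁿ · (2n+1)!) (the power series of sinh(X/2)/(X/2)). Since S has constant coefficient 1, it is a unit in ℚ[[X]]. Then the coefficient of X^{2k} in S^{-(2k+1)} equals (−1)^k · C(2k, k) / 16^k, where C(2k, k) is the binomial coefficient; in particular this coefficient is nonzero. (This coefficient is the Â-genus of the complex projective space ℂP^{2k}, whose non-vanishing is used in the proof of the main theorem.) -/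
/-!
Put `F = X·S = 2 sinh(X/2)` and `G = cosh(X/2)`, so that `F' = G` and `4G² = 4 + F²`. The
coefficient `[X^m] S^{-(m+1)}` is the residue of `F^{-(m+1)}`. By these two relations the
derivative of `G / F^{m+1}` is `-(m/4)·F^{-m} - (m+1)·F^{-(m+2)}`, and a derivative has no
residue, so `(m+1)·[X^{m+1}] S^{-(m+2)} = -(m/4)·[X^{m-1}] S^{-m}`. Along the even indices
this is the recurrence `(k+1)·C(2k+2, k+1) = 2(2k+1)·C(2k, k)` of the central binomial
coefficients, up to the factor `-1/16`. Inside `ℚ[[X]]` the residue of `G/F^{m+1}` is the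
coefficient of `X^{m+1}` in `H = G·S^{-(m+1)}`, and "a derivative has no residue" becomes
`[X^n](X·H') = n·[X^n]H` at `n = m+1`.
-/

/-- The formal power series `S = ∑_{n ≥ 0} X^{2n} / (4ⁿ · (2n+1)!) ∈ ℚ[[X]]`,
i.e. the power series expansion of `sinh(X/2)/(X/2)`. -/
noncomputable def sinhHalfSeries : PowerSeries ℚ :=
  PowerSeries.mk fun m =>
    if m % 2 = 0 then 1 / (4 ^ (m / 2) * (Nat.factorial (m + 1) : ℚ)) else 0

open PowerSeries

theorem PowerSeries.coeff_X_mul_derivative {R : Type*} [CommSemiring R] (f : R⟦X⟧) (n : ℕ) :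
    coeff n (X * d⁄dX R f) = n * coeff n f := by
  cases n with
  | zero => simp
  | succ n => rw [coeff_succ_X_mul, coeff_derivative, mul_comm]; push_cast; rfl

noncomputable def coshHalfSeries : ℚ⟦X⟧ :=
  mk fun m => if m % 2 = 0 then 1 / (4 ^ (m / 2) * (m.factorial : ℚ)) else 0

theorem constantCoeff_sinhHalfSeries : constantCoeff sinhHalfSeries = 1 := by
  simp [sinhHalfSeries]

theorem constantCoeff_coshHalfSeries : constantCoeff coshHalfSeries = 1 := by
  simp [coshHalfSeries]

theorem derivative_X_mul_sinhHalfSeries : d⁄dX ℚ (X * sinhHalfSeries) = coshHalfSeries := by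
  ext n
  rw [coeff_derivative, coeff_succ_X_mul]
  obtain ⟨j, rfl | rfl⟩ := Nat.even_or_odd' n
  · simp only [sinhHalfSeries, coshHalfSeries, coeff_mk, Nat.mul_mod_right, if_true,
      Nat.factorial_succ]
    push_cast
    field_simp
  · simp [sinhHalfSeries, coshHalfSeries, Nat.add_mod]

theorem derivative_coshHalfSeries :
    d⁄dX ℚ coshHalfSeries = C (1 / 4) * (X * sinhHalfSeries) := by
  ext n
  rw [coeff_derivative, coeff_C_mul]
  rcases n with _ | n
  · simp [coshHalfSeries]
  rw [coeff_succ_X_mul]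
  obtain ⟨j, rfl | rfl⟩ := Nat.even_or_odd' n
  · rw [show 2 * j + 1 + 1 = 2 * (j + 1) by ring]
    simp only [sinhHalfSeries, coshHalfSeries, coeff_mk, Nat.mul_mod_right, if_true,
      Nat.mul_div_cancel_left _ two_pos, pow_succ]
    rw [show 2 * (j + 1) = 2 * j + 1 + 1 by ring, Nat.factorial_succ, Nat.factorial_succ]
    push_cast
    field_simp
  · simp [sinhHalfSeries, coshHalfSeries, Nat.add_mod]

theorem coshHalfSeries_sq :
    coshHalfSeries ^ 2 = 1 + C (1 / 4) * (X * sinhHalfSeries) ^ 2 := by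
  apply derivative.ext
  · rw [map_add, derivative_one, Derivation.leibniz, derivative_C, derivative_pow, derivative_pow,
      derivative_X_mul_sinhHalfSeries, derivative_coshHalfSeries]
    simp only [smul_eq_mul]
    ring
  · simp [constantCoeff_coshHalfSeries]

theorem X_mul_derivative_sinhHalfSeries :
    X * d⁄dX ℚ sinhHalfSeries = coshHalfSeries - sinhHalfSeries := by
  rw [← derivative_X_mul_sinhHalfSeries, Derivation.leibniz, derivative_X, smul_eq_mul,
    smul_eq_mul, mul_one, add_sub_cancel_right]

theorem sinhHalfSeries_mul_inv : sinhHalfSeries * sinhHalfSeries⁻¹ = 1 :=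
  PowerSeries.mul_inv_cancel _ (by simp [constantCoeff_sinhHalfSeries])

theorem X_mul_derivative_sinhHalfSeries_inv :
    X * d⁄dX ℚ sinhHalfSeries⁻¹ =
      sinhHalfSeries⁻¹ - coshHalfSeries * sinhHalfSeries⁻¹ ^ 2 := by
  rw [derivative_inv']
  linear_combination (-sinhHalfSeries⁻¹ ^ 2) * X_mul_derivative_sinhHalfSeries
    + sinhHalfSeries⁻¹ * sinhHalfSeries_mul_inv

theorem X_mul_derivative_coshHalfSeries_mul_inv_pow (m : ℕ) :
    X * d⁄dX ℚ (coshHalfSeries * sinhHalfSeries⁻¹ ^ (m + 1)) =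
      C ((m : ℚ) + 1) *
          (coshHalfSeries * sinhHalfSeries⁻¹ ^ (m + 1) - sinhHalfSeries⁻¹ ^ (m + 2)) -
        C ((m : ℚ) / 4) * (X ^ 2 * sinhHalfSeries⁻¹ ^ m) := by
  set T := sinhHalfSeries⁻¹
  have hcast : ((m + 1 : ℕ) : ℚ⟦X⟧) = C ((m : ℚ) + 1) := by simp
  have hC : C ((m : ℚ) / 4) = C (1 / 4) * (C ((m : ℚ) + 1) - 1) := by
    rw [← map_one C, ← map_sub, ← map_mul]; congr 1; ring
  rw [Derivation.leibniz, Derivation.leibniz_pow, derivative_coshHalfSeries, hC]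
  simp only [smul_eq_mul, nsmul_eq_mul, add_tsub_cancel_right, hcast]
  linear_combination
    C ((m : ℚ) + 1) * coshHalfSeries * T ^ m * X_mul_derivative_sinhHalfSeries_inv
    - C ((m : ℚ) + 1) * T ^ (m + 2) * coshHalfSeries_sq
    + C (1 / 4) * X ^ 2 * T ^ m * (1 - C ((m : ℚ) + 1) * (sinhHalfSeries * T + 1))
      * sinhHalfSeries_mul_inv

theorem coeff_sinhHalfSeries_inv_pow_recurrence (m : ℕ) :
    ((m : ℚ) + 2) * coeff (m + 2) (sinhHalfSeries⁻¹ ^ (m + 3)) =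
      -(((m : ℚ) + 1) / 4) * coeff m (sinhHalfSeries⁻¹ ^ (m + 1)) := by
  have h := congrArg (coeff (m + 2)) (X_mul_derivative_coshHalfSeries_mul_inv_pow (m + 1))
  rw [coeff_X_mul_derivative, map_sub, coeff_C_mul, coeff_C_mul, map_sub, coeff_X_pow_mul] at h
  simp only [add_assoc, Nat.reduceAdd] at h
  push_cast at h
  linear_combination h

theorem coeff_two_mul_sinhHalfSeries_inv_pow (k : ℕ) :
    coeff (2 * k) (sinhHalfSeries⁻¹ ^ (2 * k + 1)) =
      (-1) ^ k * ((2 * k).choose k : ℚ) / 16 ^ k := by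
  induction k with
  | zero => simp [constantCoeff_sinhHalfSeries]
  | succ k ih =>
    have hrec := coeff_sinhHalfSeries_inv_pow_recurrence (2 * k)
    have hbinom : ((2 * k + 2).choose (k + 1) : ℚ) =
        2 * (2 * k + 1) * ((2 * k).choose k : ℚ) / (k + 1) := by
      rw [eq_div_iff (by positivity), mul_comm]
      exact_mod_cast Nat.succ_mul_centralBinom_succ k
    rw [ih] at hrec
    push_cast at hrec
    rw [show 2 * (k + 1) = 2 * k + 2 by ring, show 2 * k + 2 + 1 = 2 * k + 3 by ring]
    apply mul_left_cancel₀ (by positivity : (2 * (k : ℚ) + 2) ≠ 0)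
    rw [hrec, hbinom]
    field_simp
    ring

theorem coeff_sinhHalfSeries_inv_pow_general (k : ℕ) :
    PowerSeries.constantCoeff sinhHalfSeries = 1 ∧
    IsUnit sinhHalfSeries ∧
    PowerSeries.coeff (2 * k) (sinhHalfSeries⁻¹ ^ (2 * k + 1)) =
      (-1 : ℚ) ^ k * (Nat.choose (2 * k) k : ℚ) / 16 ^ k ∧
    PowerSeries.coeff (2 * k) (sinhHalfSeries⁻¹ ^ (2 * k + 1)) ≠ 0 := by
  have hcoeff := coeff_two_mul_sinhHalfSeries_inv_pow k
  refine ⟨constantCoeff_sinhHalfSeries,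
    isUnit_iff_constantCoeff.mpr (by simp [constantCoeff_sinhHalfSeries]), hcoeff, ?_⟩
  rw [hcoeff]
  exact div_ne_zero (mul_ne_zero (pow_ne_zero k (by norm_num))
    (Nat.cast_ne_zero.mpr (Nat.centralBinom_ne_zero k))) (by positivity)

/-- The series `S = ∑_{n≥0} X^{2n} / (4ⁿ (2n+1)!)` has constant
coefficient `1`, hence is a unit in `ℚ[[X]]`, and for `k ≥ 1` the coefficient of `X^{2k}` in
`S^{-(2k+1)}` equals `(-1)^k · C(2k, k) / 16^k`; in particular it is nonzero.  (This
coefficient is the Â-genus of the complex projective space `ℂP^{2k}`.) -/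
theorem coeff_sinhHalfSeries_inv_pow (k : ℕ) (hk : 1 ≤ k) :
    PowerSeries.constantCoeff sinhHalfSeries = 1 ∧
    IsUnit sinhHalfSeries ∧
    PowerSeries.coeff (2 * k) (sinhHalfSeries⁻¹ ^ (2 * k + 1)) =
      (-1 : ℚ) ^ k * (Nat.choose (2 * k) k : ℚ) / 16 ^ k ∧
    PowerSeries.coeff (2 * k) (sinhHalfSeries⁻¹ ^ (2 * k + 1)) ≠ 0 :=
  coeff_sinhHalfSeries_inv_pow_general k
end
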